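/- No circle-center set is finite: there is no finite set S ⊆ ℝ² that is not contained in an affine line and that contains its circle centers. Equivalently, if S ⊆ ℝ² is finite and contains three non-collinear points, then S does not contain its circle centers. -/

import Mathlib

/-!
Let `A, B` be a closest pair of points of `S`, and among the points of `S` on the perpendicular
bisector of `AB` let `O` be one closest to `A`. Since `OA ≥ AB`, `O` is not the midpoint of `AB`,
so the triangle `ABO` is non-degenerate and its circumcenter `O'` lies in `S`, again on the
bisector. In the plane `O'` lies on the line through `O` and the midpoint, and a computation on
the isosceles triangle `ABO` shows that `O'A < OA` as soon as `OA ≥ AB`, contradicting the choice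
of `O`.
-/

open Real EuclideanGeometry

/-- A set in the Euclidean plane contains its circle centers if, whenever it contains
three non-collinear points, it contains the point equidistant from all three
(the circumcenter of the triangle they form). -/
def ContainsCircleCenters (S : Set (EuclideanSpace ℝ (Fin 2))) : Prop :=
  ∀ A ∈ S, ∀ B ∈ S, ∀ C ∈ S,
    ¬ Collinear ℝ ({A, B, C} : Set (EuclideanSpace ℝ (Fin 2))) →
    ∀ O : EuclideanSpace ℝ (Fin 2),
      dist O A = dist O B → dist O A = dist O C → O ∈ S

open Module

theorem Set.Finite.exists_dist_le_dist {α : Type*} [PseudoMetricSpace α] {s : Set α}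
    (hs : s.Finite) (hnt : s.Nontrivial) :
    ∃ a ∈ s, ∃ b ∈ s, a ≠ b ∧ ∀ x ∈ s, ∀ y ∈ s, x ≠ y → dist a b ≤ dist x y := by
  obtain ⟨x, hx, y, hy, hxy⟩ := hnt
  obtain ⟨⟨a, b⟩, ⟨ha, hb, hab⟩, hmin⟩ :=
    Set.exists_min_image {p : α × α | p.1 ∈ s ∧ p.2 ∈ s ∧ p.1 ≠ p.2} (fun p => dist p.1 p.2)
      ((hs.prod hs).subset fun p hp => ⟨hp.1, hp.2.1⟩) ⟨(x, y), hx, hy, hxy⟩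
  exact ⟨a, ha, b, hb, hab, fun x hx y hy hxy => hmin (x, y) ⟨hx, hy, hxy⟩⟩

section Affine

variable {k V P : Type*} [DivisionRing k] [AddCommGroup V] [Module k V] [AddTorsor V P]

theorem Set.Subsingleton.collinear {s : Set P} (hs : s.Subsingleton) : Collinear k s := by
  rcases hs.eq_empty_or_singleton with rfl | ⟨p, rfl⟩
  exacts [collinear_empty k P, collinear_singleton k p]

theorem collinear_affineSpan_pair (A B : P) : Collinear k (line[k, A, B] : Set P) := by
  rw [Collinear, ← direction_affineSpan, AffineSubspace.affineSpan_coe, direction_affineSpan]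
  exact collinear_pair k A B

theorem exists_not_collinear_insert_insert {s : Set P} (hs : ¬Collinear k s) {A B : P}
    (hAB : A ≠ B) : ∃ C ∈ s, ¬Collinear k ({A, B, C} : Set P) := by
  by_contra! h
  refine hs ((collinear_affineSpan_pair A B).subset fun C hC => ?_)
  exact (h C hC).mem_affineSpan_of_mem_of_ne (by simp) (by simp) (by simp) hAB

end Affine

theorem ne_midpoint_of_dist_le {V P : Type*} [NormedAddCommGroup V] [NormedSpace ℝ V]
    [MetricSpace P] [NormedAddTorsor V P] {A B O : P} (hAB : A ≠ B)
    (hle : dist A B ≤ dist O A) : O ≠ midpoint ℝ A B := by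
  rintro rfl
  rw [dist_midpoint_left] at hle
  norm_num at hle
  exact hAB (dist_le_zero.1 (by linarith))

section Euclidean

variable {V P : Type*} [NormedAddCommGroup V] [InnerProductSpace ℝ V] [MetricSpace P]
  [NormedAddTorsor V P]

theorem exists_dist_eq_dist_eq_of_not_collinear {A B C : P}
    (h : ¬Collinear ℝ ({A, B, C} : Set P)) :
    ∃ O : P, dist O A = dist O B ∧ dist O A = dist O C := by
  let t : Affine.Triangle ℝ P := ⟨![A, B, C], affineIndependent_iff_not_collinear_set.2 h⟩
  have hr := t.dist_circumcenter_eq_circumradius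
  refine ⟨t.circumcenter, ?_, ?_⟩
  · simpa [dist_comm, t] using (hr 0).trans (hr 1).symm
  · simpa [dist_comm, t] using (hr 0).trans (hr 2).symm

theorem eq_midpoint_of_collinear_of_dist_eq {A B O : P} (hAB : A ≠ B)
    (hc : Collinear ℝ ({A, B, O} : Set P)) (hO : dist O A = dist O B) :
    O = midpoint ℝ A B := by
  have hline : O -ᵥ midpoint ℝ A B ∈ ℝ ∙ (B -ᵥ A) := by
    rw [← vectorSpan_pair_rev, ← direction_affineSpan]
    exact AffineSubspace.vsub_mem_direction
      (hc.mem_affineSpan_of_mem_of_ne (by simp) (by simp) (by simp) hAB)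
      (AffineMap.lineMap_mem_affineSpan_pair _ A B)
  have hperp : O -ᵥ midpoint ℝ A B ∈ (ℝ ∙ (B -ᵥ A))ᗮ := by
    rw [Submodule.mem_orthogonal_singleton_iff_inner_right, real_inner_comm]
    exact inner_vsub_vsub_of_dist_eq_of_dist_eq (dist_left_midpoint_eq_dist_right_midpoint A B)
      (by rw [dist_comm, hO, dist_comm])
  have h0 := (Submodule.inf_orthogonal_eq_bot _).le ⟨hline, hperp⟩
  rwa [Submodule.mem_bot, vsub_eq_zero_iff_eq] at h0

theorem not_collinear_of_dist_eq_of_dist_le {A B O : P} (hAB : A ≠ B)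
    (hO : dist O A = dist O B) (hle : dist A B ≤ dist O A) :
    ¬Collinear ℝ ({A, B, O} : Set P) := fun hc =>
  ne_midpoint_of_dist_le hAB hle (eq_midpoint_of_collinear_of_dist_eq hAB hc hO)

theorem dist_sq_eq_dist_midpoint_sq_add {A B O : P} (hO : dist O A = dist O B) :
    dist O A ^ 2 = dist O (midpoint ℝ A B) ^ 2 + (dist A B / 2) ^ 2 := by
  have := dist_sq_add_dist_sq_eq_two_mul_dist_midpoint_sq_add_half_dist_sq O A B
  rw [← hO] at this
  linarith

theorem dist_lt_of_base_le_leg [Fact (finrank ℝ V = 2)] {A B O O' : P} (hAB : A ≠ B)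
    (hO : dist O A = dist O B) (hle : dist A B ≤ dist O A)
    (hO'B : dist O' A = dist O' B) (hO'O : dist O' A = dist O' O) :
    dist O' A < dist O A := by
  set M := midpoint ℝ A B
  have hMA : dist A M = dist B M := dist_left_midpoint_eq_dist_right_midpoint A B
  have hOM : O ≠ M := ne_midpoint_of_dist_le hAB hle
  -- both `O -ᵥ M` and `O' -ᵥ M` are orthogonal to `B -ᵥ A`, hence parallel in the plane
  obtain ⟨c, hc⟩ := Submodule.mem_span_singleton.1 <|
    Submodule.mem_span_singleton_of_inner_eq_zero_of_inner_eq_zero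
      (vsub_ne_zero.2 hAB.symm) (vsub_ne_zero.2 hOM)
      (by rw [real_inner_comm]
          exact inner_vsub_vsub_of_dist_eq_of_dist_eq hMA (by rw [dist_comm, hO'B, dist_comm]))
      (by rw [real_inner_comm]
          exact inner_vsub_vsub_of_dist_eq_of_dist_eq hMA (by rw [dist_comm, hO, dist_comm]))
  have hdO'M : dist O' M = |c| * dist O M := by
    rw [dist_eq_norm_vsub V, ← hc, norm_smul, Real.norm_eq_abs, dist_eq_norm_vsub V]
  have hdO'O : dist O' O = |c - 1| * dist O M := by
    rw [dist_eq_norm_vsub V, ← vsub_sub_vsub_cancel_right O' O M, ← hc, ← one_smul ℝ (O -ᵥ M),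
      smul_smul, ← sub_smul, mul_one, norm_smul, Real.norm_eq_abs, dist_eq_norm_vsub V]
  have hr := dist_sq_eq_dist_midpoint_sq_add hO
  have hR := dist_sq_eq_dist_midpoint_sq_add hO'B
  rw [hdO'M, mul_pow, sq_abs] at hR
  have hR' : dist O' A ^ 2 = (c - 1) ^ 2 * dist O M ^ 2 := by
    rw [hO'O, hdO'O, mul_pow, sq_abs]
  have hh : 0 < dist O M ^ 2 := pow_pos (dist_pos.2 hOM) 2
  have hbase : (1 - 2 * c) * dist O M ^ 2 = (dist A B / 2) ^ 2 := by
    linear_combination hR - hR'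
  -- `OA ≥ AB` confines `c` to `[1/3, 1/2]`, and then `OA² - O'A² = (1 - c²) · OM² > 0`
  have hc₁ : 1 / 3 ≤ c := by nlinarith [pow_le_pow_left₀ dist_nonneg hle 2]
  have hc₂ : c ≤ 1 / 2 := by nlinarith [sq_nonneg (dist A B / 2)]
  refine lt_of_pow_lt_pow_left₀ 2 dist_nonneg ?_
  nlinarith

end Euclidean

theorem no_finite_circle_center_set (S : Set (EuclideanSpace ℝ (Fin 2)))
    (hfin : S.Finite) (hline : ¬ Collinear ℝ S) :
    ¬ ContainsCircleCenters S := by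
  intro hS
  have : Fact (finrank ℝ (EuclideanSpace ℝ (Fin 2)) = 2) := ⟨finrank_euclideanSpace_fin⟩
  obtain ⟨A, hA, B, hB, hAB, hmin⟩ :=
    hfin.exists_dist_le_dist (Set.not_subsingleton_iff.1 fun h => hline h.collinear)
  have hcenter : ∀ C ∈ S, ¬Collinear ℝ ({A, B, C} : Set _) →
      ∃ O ∈ S, dist O A = dist O B ∧ dist O A = dist O C := fun C hC hABC =>
    let ⟨O, hOB, hOC⟩ := exists_dist_eq_dist_eq_of_not_collinear hABC
    ⟨O, hS A hA B hB C hC hABC O hOB hOC, hOB, hOC⟩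
  obtain ⟨C, hC, hABC⟩ := exists_not_collinear_insert_insert hline hAB
  obtain ⟨O₀, hO₀, hO₀B, -⟩ := hcenter C hC hABC
  obtain ⟨O, ⟨hO, hOB⟩, hOmin⟩ := Set.exists_min_image {O ∈ S | dist O A = dist O B}
    (dist · A) (hfin.subset fun _ h => h.1) ⟨O₀, hO₀, hO₀B⟩
  have hOA : O ≠ A := by
    rintro rfl
    exact hAB (dist_eq_zero.1 (by rw [← hOB, dist_self]))
  have hle : dist A B ≤ dist O A := hmin O hO A hA hOA
  obtain ⟨O', hO', hO'B, hO'O⟩ := hcenter O hO (not_collinear_of_dist_eq_of_dist_le hAB hOB hle)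
  exact (dist_lt_of_base_le_leg hAB hOB hle hO'B hO'O).not_ge (hOmin O' ⟨hO', hO'B⟩)
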